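/- In the decorated lattice setting with gcd(q_1,…,q_d) = 1, let s(λ) be the degree-(ν−1)Q polynomial such that h̃_0(z;λ) = h̃_∞(z;λ) = s(λ)(z_1⋯z_d)^Q ∏_{n∈W} r_0(μ_n ⊙ z) whenever s(λ) ≠ 0, where r_0(z) = z_1^{−1}+⋯+z_d^{−1}. Then for every λ ∈ ℂ with s(λ) ≠ 0 (i.e., for all λ outside the finite zero set of s), the Laurent polynomials h_0(·;λ) and h_∞(·;λ) are irreducible in ℂ[z_1^{±1},…,z_d^{±1}]. -/

import Mathlib

open scoped BigOperators Classical

noncomputable section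

/-- Multivariate Laurent polynomials in `m` variables over `ℂ`,
realized as the group algebra of `ℤ^m`. -/
abbrev MvLaurent (m : ℕ) : Type := AddMonoidAlgebra ℂ (Fin m → ℤ)

namespace MvL

variable {m : ℕ}

/-- The monomial `c · x^α`. -/
def mono (α : Fin m → ℤ) (c : ℂ) : MvLaurent m := AddMonoidAlgebra.ofCoeff (Finsupp.single α c)

/-- Evaluation of a Laurent polynomial at a point `x ∈ (ℂ*)^m`. -/
def eval (f : MvLaurent m) (x : Fin m → ℂ) : ℂ :=
  Finsupp.sum f.coeff fun α c => c * ∏ j, x j ^ (α j)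

/-- Units of the Laurent-polynomial ring: the nonzero monomials. -/
def IsUnitL (f : MvLaurent m) : Prop :=
  ∃ (c : ℂ) (α : Fin m → ℤ), c ≠ 0 ∧ f = mono α c

/-- Irreducibility of a Laurent polynomial. -/
def IrreducibleL (f : MvLaurent m) : Prop :=
  f ≠ 0 ∧ ¬ IsUnitL f ∧ ∀ g h : MvLaurent m, f = g * h → IsUnitL g ∨ IsUnitL h

/-- The zero set of `f` inside `(ℂ*)^m`. -/
def Vset (f : MvLaurent m) : Set (Fin m → ℂ) :=
  {x | (∀ j, x j ≠ 0) ∧ eval f x = 0}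

/-- `f` meets a point `y` of `(ℂ ∪ {∞})^m` if the closure of `V(f)` contains `y`. -/
def Meets (f : MvLaurent m) (y : Fin m → OnePoint ℂ) : Prop :=
  y ∈ closure ((fun (x : Fin m → ℂ) (j : Fin m) => (x j : OnePoint ℂ)) '' Vset f)

/-- The point `0_m`. -/
def zeroPt (m : ℕ) : Fin m → OnePoint ℂ := fun _ => ((0 : ℂ) : OnePoint ℂ)

/-- The point `(0_{m-1}, ∞)`. -/
def zeroInftyPt (m : ℕ) : Fin m → OnePoint ℂ :=
  fun j => if (j : ℕ) = m - 1 then (OnePoint.infty : OnePoint ℂ) else ((0 : ℂ) : OnePoint ℂ)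

/-- Negate the last exponent: realizes `x̂ = (x_1,…,x_{m-1},x_m⁻¹)`. -/
def negLast (m : ℕ) (α : Fin m → ℤ) : Fin m → ℤ :=
  fun j => if (j : ℕ) = m - 1 then -(α j) else α j

/-- `f(x̂)`. -/
def hat (f : MvLaurent m) : MvLaurent m := AddMonoidAlgebra.ofCoeff (Finsupp.mapDomain (negLast m) f.coeff)

/-- The least exponent of `x_j` occurring in `f` (junk value `0` for `f = 0`). -/
def alphaMin (f : MvLaurent m) (j : Fin m) : ℤ :=
  WithTop.untopD 0 ((Finsupp.support f.coeff).image fun α => α j).min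

/-- The vector `α_{0,f}`. -/
def alpha0 (f : MvLaurent m) : Fin m → ℤ := fun j => max (-(alphaMin f j)) 0

/-- `f^+ = x^{α_{0,f}} f`. -/
def fplus (f : MvLaurent m) : MvLaurent m :=
  AddMonoidAlgebra.ofCoeff (Finsupp.mapDomain (fun α => α + alpha0 f) f.coeff)

/-- Total degree of an exponent vector. -/
def degOf (α : Fin m → ℤ) : ℤ := ∑ j, α j

/-- Degree of a Laurent polynomial (junk value `0` for `f = 0`). -/
def degL (f : MvLaurent m) : ℤ :=
  WithBot.unbotD 0 ((Finsupp.support f.coeff).image degOf).max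

/-- Minimal total degree occurring in `f`. -/
def lowDeg (f : MvLaurent m) : ℤ :=
  WithTop.untopD 0 ((Finsupp.support f.coeff).image degOf).min

/-- The lowest degree component of `f`. -/
def lowComp (f : MvLaurent m) : MvLaurent m :=
  AddMonoidAlgebra.ofCoeff (Finsupp.filter (fun α => degOf α = lowDeg f) f.coeff)

/-- `l`-degree of an exponent vector. -/
def degW (l : Fin m → ℤ) (α : Fin m → ℤ) : ℤ := ∑ j, l j * α j

/-- Minimal `l`-degree occurring in `f`. -/
def lowDegW (l : Fin m → ℤ) (f : MvLaurent m) : ℤ :=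
  WithTop.untopD 0 ((Finsupp.support f.coeff).image (degW l)).min

/-- The component of lowest `l`-degree of `f`. -/
def lowCompW (l : Fin m → ℤ) (f : MvLaurent m) : MvLaurent m :=
  AddMonoidAlgebra.ofCoeff (Finsupp.filter (fun α => degW l α = lowDegW l f) f.coeff)

/-- `f(x^{⊙l})`. -/
def odotPow (l : Fin m → ℤ) (f : MvLaurent m) : MvLaurent m :=
  AddMonoidAlgebra.ofCoeff (Finsupp.mapDomain (fun α j => l j * α j) f.coeff)

/-- `f` is a polynomial: all exponents are nonnegative. -/
def IsPolynomialL (f : MvLaurent m) : Prop :=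
  ∀ α ∈ Finsupp.support f.coeff, ∀ j, 0 ≤ α j

/-- A positive monomial `c x^α`: `c ≠ 0`, `α ≠ 0`, all `α_j ≥ 0`. -/
def IsPosMonomial (f : MvLaurent m) : Prop :=
  ∃ (c : ℂ) (α : Fin m → ℤ), c ≠ 0 ∧ α ≠ 0 ∧ (∀ j, 0 ≤ α j) ∧ f = mono α c

/-- A proper polynomial: a polynomial with no positive monomial factor
(in the polynomial ring). -/
def IsProper (f : MvLaurent m) : Prop :=
  IsPolynomialL f ∧
    ¬ ∃ g h : MvLaurent m, IsPosMonomial g ∧ IsPolynomialL h ∧ f = g * h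

/-- `f` is a unit times a product of exactly `k` irreducible Laurent polynomials. -/
def HasFactorization (f : MvLaurent m) (k : ℕ) : Prop :=
  ∃ (u : MvLaurent m) (s : Multiset (MvLaurent m)),
    IsUnitL u ∧ (∀ g ∈ s, IrreducibleL g) ∧ Multiset.card s = k ∧ f = u * s.prod

/-- `f` has at most `k` irreducible components. -/
def HasAtMostComponents (f : MvLaurent m) (k : ℕ) : Prop :=
  ∃ j ≤ k, HasFactorization f j

/-- `f` has exactly `k` irreducible components (and not fewer). -/
def HasExactlyComponents (f : MvLaurent m) (k : ℕ) : Prop :=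
  HasFactorization f k ∧ ∀ j < k, ¬ HasFactorization f j

/-- Irreducibility in the polynomial ring `ℂ[x_1,…,x_m]`
(units there are the nonzero constants). -/
def IrreduciblePolyL (g : MvLaurent m) : Prop :=
  IsPolynomialL g ∧ g ≠ 0 ∧ (¬ ∃ c : ℂ, g = mono 0 c) ∧
    ∀ a b : MvLaurent m, IsPolynomialL a → IsPolynomialL b → g = a * b →
      (∃ c : ℂ, c ≠ 0 ∧ a = mono 0 c) ∨ (∃ c : ℂ, c ≠ 0 ∧ b = mono 0 c)

end MvL

namespace Per

/-- `e^{2πi r}`. -/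
def e2πi (r : ℂ) : ℂ := Complex.exp (2 * Real.pi * Complex.I * r)

/-- The fundamental domain `W = {w ∈ ℤ^d : 0 ≤ w_i < q_i}`. -/
abbrev W (d : ℕ) (q : Fin d → ℕ) : Type := (t : Fin d) → Fin (q t)

/-- Inclusion of `W` into `ℤ^d`. -/
def wz {d : ℕ} {q : Fin d → ℕ} (w : W d q) : Fin d → ℤ := fun t => ((w t : ℕ) : ℤ)

/-- `Q = q_1 ⋯ q_d`. -/
def Qn {d : ℕ} (q : Fin d → ℕ) : ℕ := ∏ t, q t

/-- `q` viewed in `ℤ^d`. -/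
def qz {d : ℕ} (q : Fin d → ℕ) : Fin d → ℤ := fun t => (q t : ℤ)

/-- `μ_n = (e^{2πi n_1/q_1}, …, e^{2πi n_d/q_d})`. -/
def μ {d : ℕ} (q : Fin d → ℕ) (n : Fin d → ℤ) : Fin d → ℂ :=
  fun t => e2πi ((n t : ℂ) / (q t : ℂ))

/-- The standard basis exponent vector `e_{t0}` of `ℤ^m`. -/
def eV (m : ℕ) (t0 : Fin m) : Fin m → ℤ := fun t => if t = t0 then 1 else 0

/-- `V` is `q`-periodic. -/
def QPeriodic {d ν : ℕ} (q : Fin d → ℕ) (V : Fin ν → (Fin d → ℤ) → ℂ) : Prop :=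
  ∀ (j : Fin ν) (n lv : Fin d → ℤ), V j (fun t => n t + lv t * (q t : ℤ)) = V j n

/-- The Fourier coefficient `V̂_j(q^* ⊙ (w-w')) = Q^{-1/2} Σ_{n∈W} e^{-2πi⟨q^*⊙(w-w'),n⟩} V(j,n)`. -/
def Vhat {d ν : ℕ} (q : Fin d → ℕ) (V : Fin ν → (Fin d → ℤ) → ℂ) (j : Fin ν)
    (w w' : W d q) : ℂ :=
  ((Real.sqrt (Qn q) : ℂ))⁻¹ *
    ∑ n : W d q,
      Complex.exp (-(2 * Real.pi * Complex.I) *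
        ∑ t, (((wz w t - wz w' t : ℤ) : ℂ) / (q t : ℂ)) * ((wz n t : ℤ) : ℂ)) *
      V j (wz n)

/-- The matrix `B_V`, with entries regarded as constant Laurent polynomials:
`((i,w),(j,w'))` entry `δ_{ij} V̂_i(q^*⊙(w-w'))`. -/
def BmatL {d : ℕ} (ν : ℕ) (q : Fin d → ℕ) (V : Fin ν → (Fin d → ℤ) → ℂ) :
    Matrix (Fin ν × W d q) (Fin ν × W d q) (MvLaurent d) :=
  fun x y => if x.1 = y.1 then MvL.mono 0 (Vhat q V x.1 x.2 y.2) else 0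

end Per

namespace Decor

open Per

/-- `b₀(μ_n ⊙ z) = Σ_t (μ_{n,t} z_t + (μ_{n,t} z_t)⁻¹)` as a formal Laurent
polynomial in `z`. -/
def b0 (d : ℕ) (q : Fin d → ℕ) (n : Fin d → ℤ) : MvLaurent d :=
  ∑ t, (MvL.mono (eV d t) (μ q n t) + MvL.mono (-(eV d t)) ((μ q n t)⁻¹))

/-- The decorated symbol `p(μ_n ⊙ z)`: `(1,1)` entry `b₀(μ_n ⊙ z)`, entries `1`
on the cycle adjacency positions `(i,i±1)` and `(1,ν), (ν,1)`, zero elsewhere. -/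
def decorBlock (d ν : ℕ) (q : Fin d → ℕ) (n : Fin d → ℤ) :
    Matrix (Fin ν) (Fin ν) (MvLaurent d) :=
  fun i j =>
    if i = j then (if (i : ℕ) = 0 then b0 d q n else 0)
    else if ((i : ℕ) + 1 = (j : ℕ) ∨ (j : ℕ) + 1 = (i : ℕ) ∨
              ((i : ℕ) = 0 ∧ (j : ℕ) = ν - 1) ∨ ((j : ℕ) = 0 ∧ (i : ℕ) = ν - 1))
      then 1 else 0

/-- The block-diagonal matrix `D_z` for the decorated lattice (formal in `z`). -/
def decorD (d ν : ℕ) (q : Fin d → ℕ) :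
    Matrix (Fin ν × W d q) (Fin ν × W d q) (MvLaurent d) :=
  fun x y => if x.2 = y.2 then decorBlock d ν q (wz x.2) x.1 y.1 else 0

/-- `P̃(z;λ) = det(D_z + B_V - λI)` as a formal Laurent polynomial in `z`. -/
def decorPt (d ν : ℕ) (q : Fin d → ℕ) (V : Fin ν → (Fin d → ℤ) → ℂ) (lam : ℂ) :
    MvLaurent d :=
  Matrix.det
    (decorD d ν q + BmatL ν q V -
      (MvL.mono 0 lam : MvLaurent d) •
        (1 : Matrix (Fin ν × W d q) (Fin ν × W d q) (MvLaurent d)))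

/-- `r₀(μ_n ⊙ z) = Σ_t (μ_{n,t} z_t)⁻¹` as a formal Laurent polynomial in `z`. -/
def r0mu (d : ℕ) (q : Fin d → ℕ) (n : Fin d → ℤ) : MvLaurent d :=
  ∑ t, MvL.mono (-(eV d t)) ((μ q n t)⁻¹)

end Decor

open MvL Per Decor

/-! The hypothesis says that `h(z^{⊙q})` is, up to a monomial, the product of the
`r₀(μ_n ⊙ z)`, `n ∈ W`. After `z ↦ z⁻¹` these are linear forms, hence primes of the Laurent ring
when `d ≥ 2`, and they are pairwise non-associated because `gcd q = 1`. For a factorization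
`h = a b`, the Laurent polynomials `a(z^{⊙q})` and `b(z^{⊙q})` are invariant under the
substitutions `z ↦ μ_k ⊙ z`, which permute the `r₀(μ_n ⊙ z)` transitively. So if one of them
divides `a(z^{⊙q})`, all of them do and `b` is a unit, i.e. a monomial; otherwise `a` is. -/

section PrimeProduct

variable {S ι : Type*} [CommMonoidWithZero S]

theorem Finset.prod_dvd_of_forall_prime_dvd {p : ι → S} (s : Finset ι)
    (hp : ∀ i ∈ s, Prime (p i)) (hne : ∀ i ∈ s, ∀ j ∈ s, p i ∣ p j → i = j) {x : S}
    (hx : ∀ i ∈ s, p i ∣ x) : ∏ i ∈ s, p i ∣ x := by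
  classical
  induction s using Finset.induction_on generalizing x with
  | empty => exact one_dvd x
  | insert a s ha ih =>
    simp only [Finset.mem_insert, forall_eq_or_imp] at hp hne hx
    obtain ⟨y, rfl⟩ := hx.1
    have hy : ∀ i ∈ s, p i ∣ y := fun i hi =>
      ((hp.2 i hi).dvd_or_dvd (hx.2 i hi)).resolve_left fun hia =>
        ha (hne.2 i hi |>.1 hia ▸ hi)
    rw [Finset.prod_insert ha]
    exact mul_dvd_mul_left _ (ih hp.2 (fun i hi j hj => (hne.2 i hi).2 j hj) hy)

/-- The images of the factors of `g` are fixed by the `σ k`, so a factor divisible by one `p i` is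
divisible by all of them, and then the other factor is a unit. -/
theorem irreducible_of_map_associated_prod {R G : Type*} [Monoid R] [IsCancelMulZero S]
    [Fintype ι] [Nonempty ι]
    (φ : R →* S) (hφ : ∀ x, IsUnit (φ x) → IsUnit x) (σ : G → S →* S)
    (hσ : ∀ k x, σ k (φ x) = φ x) {p : ι → S} (hp : ∀ i, Prime (p i))
    (hne : ∀ i j, p i ∣ p j → i = j) (htrans : ∀ i j, ∃ k, σ k (p i) = p j)
    {g : R} (hg : Associated (φ g) (∏ i, p i)) : Irreducible g := by
  have isUnit_of_forall_dvd : ∀ a b : R, Associated (φ a * φ b) (∏ i, p i) →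
      (∀ i, p i ∣ φ a) → IsUnit b := by
    intro a b hab ha
    have hprod : ∏ i, p i ∣ φ a :=
      Finset.prod_dvd_of_forall_prime_dvd _ (fun i _ => hp i) (fun i _ j _ => hne i j)
        fun i _ => ha i
    have ha0 : φ a ≠ 0 := fun h0 => by
      obtain ⟨i⟩ := ‹Nonempty ι›
      have : Nontrivial S := ⟨⟨p i, 0, (hp i).ne_zero⟩⟩
      rw [h0, zero_mul, Associated.comm, associated_zero_iff_eq_zero, Finset.prod_eq_zero_iff] at hab
      obtain ⟨j, -, hj⟩ := hab
      exact (hp j).ne_zero hj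
    refine hφ b (isUnit_of_dvd_one ((mul_dvd_mul_iff_left ha0).1 ?_))
    rw [mul_one]
    exact hab.dvd.trans hprod
  refine ⟨fun hu => ?_, fun a b hab => ?_⟩
  · obtain ⟨i⟩ := ‹Nonempty ι›
    exact (hp i).not_isUnit (isUnit_of_dvd_unit (Finset.dvd_prod_of_mem p (Finset.mem_univ i))
      (hg.isUnit_iff.1 (hu.map φ)))
  rw [hab, map_mul] at hg
  by_cases h : ∃ i, p i ∣ φ a
  · obtain ⟨i, hi⟩ := h
    refine .inr (isUnit_of_forall_dvd a b hg fun j => ?_)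
    obtain ⟨k, hk⟩ := htrans i j
    rw [← hk, ← hσ k a]
    exact map_dvd (σ k) hi
  · push Not at h
    refine .inl (isUnit_of_forall_dvd b a (by rwa [mul_comm]) fun j => ?_)
    exact ((hp j).dvd_or_dvd ((Finset.dvd_prod_of_mem p (Finset.mem_univ j)).trans
      hg.symm.dvd)).resolve_left (h j)

end PrimeProduct

namespace MvL

variable {m : ℕ}

theorem mono_mul_mono (α β : Fin m → ℤ) (a b : ℂ) : mono α a * mono β b = mono (α + β) (a * b) :=
  AddMonoidAlgebra.single_mul_single _ _ _ _

theorem mono_zero_one : mono 0 1 = (1 : MvLaurent m) := rfl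

theorem isUnit_mono {α : Fin m → ℤ} {c : ℂ} (hc : c ≠ 0) : IsUnit (mono α c) :=
  .of_mul_eq_one (mono (-α) c⁻¹) <| by
    rw [mono_mul_mono, add_neg_cancel, mul_inv_cancel₀ hc, mono_zero_one]

theorem isUnitL_iff_card_support_eq_one {f : MvLaurent m} :
    IsUnitL f ↔ f.coeff.support.card = 1 := by
  rw [Finsupp.card_support_eq_one]
  constructor
  · rintro ⟨c, α, hc, rfl⟩
    exact ⟨α, by simpa [mono] using hc, by simp [mono]⟩
  · rintro ⟨α, hα, hf⟩
    exact ⟨f.coeff α, α, hα, AddMonoidAlgebra.coeff_injective hf⟩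

def natExp (m : ℕ) : (Fin m →₀ ℕ) →+ (Fin m → ℤ) where
  toFun k j := k j
  map_zero' := rfl
  map_add' _ _ := by ext; simp

theorem natExp_injective : Function.Injective (natExp m) := fun _ _ h =>
  Finsupp.ext fun j => Nat.cast_inj.1 (congrFun h j)

theorem natExp_single (t : Fin m) : natExp m (Finsupp.single t 1) = eV m t := by
  ext j
  simp [natExp, eV, Finsupp.single_apply, eq_comm]

def ofMvPolynomial (m : ℕ) : MvPolynomial (Fin m) ℂ →+* MvLaurent m :=
  AddMonoidAlgebra.mapDomainRingHom ℂ (natExp m)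

theorem ofMvPolynomial_monomial (k : Fin m →₀ ℕ) (c : ℂ) :
    ofMvPolynomial m (MvPolynomial.monomial k c) = mono (natExp m k) c :=
  AddMonoidAlgebra.mapDomain_single

theorem ofMvPolynomial_injective : Function.Injective (ofMvPolynomial m) :=
  AddMonoidAlgebra.mapDomain_injective natExp_injective

theorem exists_mono_mul_eq_ofMvPolynomial (f : MvLaurent m) :
    ∃ k F, mono (natExp m k) 1 * f = ofMvPolynomial m F := by
  induction f using AddMonoidAlgebra.induction_linear with
  | zero => exact ⟨0, 0, by simp⟩
  | add f g hf hg =>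
    obtain ⟨k, F, hF⟩ := hf
    obtain ⟨k', G, hG⟩ := hg
    refine ⟨k + k', MvPolynomial.monomial k' 1 * F + MvPolynomial.monomial k 1 * G, ?_⟩
    simp only [map_add, map_mul, ofMvPolynomial_monomial, ← hF, ← hG, mul_add, ← mul_assoc,
      mono_mul_mono, mul_one]
    rw [add_comm (natExp m k')]
  | single α c =>
    refine ⟨Finsupp.equivFunOnFinite.symm fun j => (-α j).toNat,
      MvPolynomial.monomial (Finsupp.equivFunOnFinite.symm fun j => (α j).toNat) c, ?_⟩
    change mono _ 1 * mono α c = _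
    rw [ofMvPolynomial_monomial, mono_mul_mono, one_mul]
    congr 1
    ext j
    simp [natExp]
    omega

theorem exists_eq_monomial_of_isUnit_ofMvPolynomial {F : MvPolynomial (Fin m) ℂ}
    (hF : IsUnit (ofMvPolynomial m F)) : ∃ k c, c ≠ 0 ∧ F = MvPolynomial.monomial k c := by
  obtain ⟨g, hg⟩ := hF.exists_right_inv
  obtain ⟨k, G, hG⟩ := exists_mono_mul_eq_ofMvPolynomial g
  have hFG : F * G = MvPolynomial.monomial k 1 := ofMvPolynomial_injective <| by
    rw [map_mul, ← hG, mul_left_comm, hg, mul_one, ofMvPolynomial_monomial]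
  obtain ⟨k', c, -, hc, rfl⟩ :=
    (MvPolynomial.dvd_monomial_iff_exists one_ne_zero).1 (Dvd.intro G hFG)
  exact ⟨k', c, fun h => by simp [h] at hc, rfl⟩

theorem isUnitL_of_isUnit {f : MvLaurent m} (hf : IsUnit f) : IsUnitL f := by
  obtain ⟨k, F, hF⟩ := exists_mono_mul_eq_ofMvPolynomial f
  obtain ⟨k', c, hc, rfl⟩ := exists_eq_monomial_of_isUnit_ofMvPolynomial
    (hF ▸ (isUnit_mono one_ne_zero).mul hf)
  refine ⟨c, natExp m k' - natExp m k, hc, ?_⟩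
  rw [ofMvPolynomial_monomial] at hF
  calc f = mono (-natExp m k) 1 * (mono (natExp m k) 1 * f) := by
        rw [← mul_assoc, mono_mul_mono, neg_add_cancel, one_mul, mono_zero_one, one_mul]
    _ = mono (natExp m k' - natExp m k) c := by
        rw [hF, mono_mul_mono, one_mul, neg_add_eq_sub]

theorem isUnit_iff_isUnitL {f : MvLaurent m} : IsUnit f ↔ IsUnitL f :=
  ⟨isUnitL_of_isUnit, fun ⟨_, _, hc, hf⟩ => hf ▸ isUnit_mono hc⟩

theorem IrreducibleL.of_irreducible {f : MvLaurent m} (hf : Irreducible f) : IrreducibleL f :=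
  ⟨hf.ne_zero, isUnit_iff_isUnitL.not.1 hf.not_isUnit, fun _ _ hgh =>
    (hf.isUnit_or_isUnit hgh).imp isUnitL_of_isUnit isUnitL_of_isUnit⟩

theorem dvd_of_ofMvPolynomial_dvd {p F : MvPolynomial (Fin m) ℂ} (hp : Prime p)
    (hpu : ¬IsUnit (ofMvPolynomial m p)) (h : ofMvPolynomial m p ∣ ofMvPolynomial m F) :
    p ∣ F := by
  obtain ⟨g, hg⟩ := h
  obtain ⟨k, G, hG⟩ := exists_mono_mul_eq_ofMvPolynomial g
  have hpG : p * G = MvPolynomial.monomial k 1 * F := ofMvPolynomial_injective <| by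
    rw [map_mul, map_mul, ← hG, mul_left_comm, ← hg, ofMvPolynomial_monomial]
  refine (hp.dvd_or_dvd (Dvd.intro G hpG)).resolve_left fun hpk => hpu ?_
  exact isUnit_of_dvd_unit (map_dvd _ hpk)
    (ofMvPolynomial_monomial k 1 ▸ isUnit_mono one_ne_zero)

theorem prime_ofMvPolynomial {p : MvPolynomial (Fin m) ℂ} (hp : Prime p)
    (hpu : ¬IsUnit (ofMvPolynomial m p)) : Prime (ofMvPolynomial m p) := by
  refine ⟨(map_ne_zero_iff _ ofMvPolynomial_injective).2 hp.ne_zero, hpu, fun f g hfg => ?_⟩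
  obtain ⟨k, F, hF⟩ := exists_mono_mul_eq_ofMvPolynomial f
  obtain ⟨k', G, hG⟩ := exists_mono_mul_eq_ofMvPolynomial g
  have hunit : ∀ k, IsUnit (mono (natExp m k) (1 : ℂ)) := fun _ => isUnit_mono one_ne_zero
  have hFG : p ∣ F * G := dvd_of_ofMvPolynomial_dvd hp hpu <| by
    rw [map_mul, ← hF, ← hG, mul_mul_mul_comm]
    exact dvd_mul_of_dvd_right hfg _
  refine (hp.dvd_or_dvd hFG).imp (fun h => ?_) fun h => ?_
  · rw [← (hunit k).dvd_mul_left, hF]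
    exact map_dvd _ h
  · rw [← (hunit k').dvd_mul_left, hG]
    exact map_dvd _ h

def invVars (m : ℕ) : MvLaurent m ≃ₐ[ℂ] MvLaurent m :=
  AddMonoidAlgebra.domCongr ℂ ℂ (AddEquiv.neg _)

theorem invVars_mono (α : Fin m → ℤ) (c : ℂ) : invVars m (mono α c) = mono (-α) c :=
  AddMonoidAlgebra.domCongr_single _ _ _

def dilate (l : Fin m → ℤ) : MvLaurent m →+* MvLaurent m :=
  AddMonoidAlgebra.mapDomainRingHom ℂ (AddMonoidHom.mulLeft l)

theorem odotPow_eq_dilate (l : Fin m → ℤ) (f : MvLaurent m) : odotPow l f = dilate l f := rfl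

theorem isUnit_of_isUnit_dilate {l : Fin m → ℤ} (hl : ∀ j, l j ≠ 0) {f : MvLaurent m}
    (hf : IsUnit (dilate l f)) : IsUnit f := by
  have hinj : Function.Injective (AddMonoidHom.mulLeft l) := fun _ _ h =>
    funext fun j => mul_left_cancel₀ (hl j) (congrFun h j)
  rw [isUnit_iff_isUnitL, isUnitL_iff_card_support_eq_one] at hf ⊢
  rwa [← Finset.card_image_of_injective _ hinj, ← Finsupp.mapDomain_support_of_injective hinj]

/-- The substitution `x ↦ z ⊙ x` for a point `z` of the torus. -/
def scale (z : Fin m → ℂˣ) : MvLaurent m →ₐ[ℂ] MvLaurent m :=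
  AddMonoidAlgebra.lift ℂ (MvLaurent m) (Fin m → ℤ)
    { toFun α := mono α.toAdd ↑(∏ j, z j ^ α.toAdd j)
      map_one' := by simp [mono_zero_one]
      map_mul' α β := by
        simp only [toAdd_mul, mono_mul_mono, Pi.add_apply, zpow_add, Finset.prod_mul_distrib,
          Units.val_mul] }

theorem scale_mono (z : Fin m → ℂˣ) (α : Fin m → ℤ) (c : ℂ) :
    scale z (mono α c) = mono α (c * ↑(∏ j, z j ^ α j)) := by
  change AddMonoidAlgebra.lift _ _ _ _ (AddMonoidAlgebra.single α c) = _
  rw [AddMonoidAlgebra.lift_single]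
  exact AddMonoidAlgebra.smul_single' _ _ _

theorem scale_dilate {z : Fin m → ℂˣ} {l : Fin m → ℤ} (hz : ∀ j, z j ^ l j = 1)
    (f : MvLaurent m) : scale z (dilate l f) = dilate l f := by
  induction f using AddMonoidAlgebra.induction_linear with
  | zero => simp
  | add f g hf hg => simp only [map_add, hf, hg]
  | single α c =>
    change scale z (dilate l (mono α c)) = dilate l (mono α c)
    have hdil : dilate l (mono α c) = mono (l * α) c := AddMonoidAlgebra.mapDomain_single
    simp only [hdil, scale_mono, Pi.mul_apply, zpow_mul, hz, one_zpow, Finset.prod_const_one,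
      Units.val_one, mul_one]

end MvL

namespace Per

variable {d : ℕ} (q : Fin d → ℕ)

theorem μ_add (n k : Fin d → ℤ) (t : Fin d) : μ q (n + k) t = μ q n t * μ q k t := by
  simp only [μ, e2πi, Pi.add_apply, Int.cast_add, add_div, mul_add, Complex.exp_add]

theorem μ_pow_self (n : Fin d → ℤ) (t : Fin d) : μ q n t ^ q t = 1 := by
  rcases eq_or_ne (q t) 0 with h | h
  · simp [h]
  rw [μ, e2πi, ← Complex.exp_nat_mul]
  convert Complex.exp_int_mul_two_pi_mul_I (n t) using 2
  field_simp

theorem μ_wz_eq_pow {n : W d q} (t : Fin d) :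
    μ q (wz n) t = Complex.exp (2 * Real.pi * Complex.I / q t) ^ (n t : ℕ) := by
  rw [μ, e2πi, ← Complex.exp_nat_mul, wz]
  push_cast
  ring_nf

/-- A common ratio `e` has `e ^ q t = 1` for every `t`, so its order divides `gcd q = 1`. -/
theorem eq_of_forall_μ_eq_mul (hq : ∀ t, 1 ≤ q t) (hgcd : Finset.univ.gcd q = 1)
    {n n' : W d q} {e : ℂ} (h : ∀ t, μ q (wz n) t = e * μ q (wz n') t) : n = n' := by
  have he : e = 1 := by
    refine orderOf_eq_one_iff.1 (Nat.dvd_one.1 (hgcd ▸ Finset.dvd_gcd fun t _ => ?_))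
    refine orderOf_dvd_of_pow_eq_one ?_
    have := congrArg (· ^ q t) (h t)
    simpa only [mul_pow, μ_pow_self, mul_one, eq_comm] using this
  funext t
  have hqt : q t ≠ 0 := Nat.one_le_iff_ne_zero.1 (hq t)
  have := h t
  rw [he, one_mul, μ_wz_eq_pow, μ_wz_eq_pow] at this
  exact Fin.ext ((Complex.isPrimitiveRoot_exp _ hqt).pow_inj (n t).isLt (n' t).isLt this)

end Per

namespace Decor

variable {d : ℕ} (q : Fin d → ℕ)

def linearForm (n : Fin d → ℤ) : MvPolynomial (Fin d) ℂ :=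
  MvPolynomial.sumSMulX (Finsupp.equivFunOnFinite.symm fun t => (μ q n t)⁻¹)

theorem coeff_linearForm (n : Fin d → ℤ) (t : Fin d) :
    (linearForm q n).coeff (Finsupp.single t 1) = (μ q n t)⁻¹ :=
  MvPolynomial.coeff_sumSMulX _ t

theorem μ_ne_zero (n : Fin d → ℤ) (t : Fin d) : μ q n t ≠ 0 := Complex.exp_ne_zero _

theorem irreducible_linearForm (hd : 0 < d) (n : Fin d → ℤ) : Irreducible (linearForm q n) :=
  MvPolynomial.irreducible_sumSMulX _ ⟨⟨0, hd⟩, by simp [μ_ne_zero]⟩ fun r hr =>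
    (isUnit_iff_ne_zero.2 fun h0 => μ_ne_zero q n ⟨0, hd⟩
      (inv_eq_zero.1 (zero_dvd_iff.1 (h0 ▸ hr ⟨0, hd⟩))))

theorem r0mu_eq_invVars (n : Fin d → ℤ) :
    r0mu d q n = invVars d (ofMvPolynomial d (linearForm q n)) := by
  rw [linearForm, MvPolynomial.sumSMulX, Finsupp.linearCombination_apply,
    Finsupp.sum_fintype _ (fun t (a : ℂ) => a • MvPolynomial.X t) fun _ => zero_smul ℂ _,
    map_sum, map_sum, r0mu]
  refine Finset.sum_congr rfl fun t _ => ?_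
  rw [MvPolynomial.smul_eq_C_mul, MvPolynomial.C_mul_X_eq_monomial, ofMvPolynomial_monomial,
    invVars_mono, natExp_single]
  rfl

theorem not_isUnit_ofMvPolynomial_linearForm (hd : 2 ≤ d) (n : Fin d → ℤ) :
    ¬IsUnit (ofMvPolynomial d (linearForm q n)) := by
  intro h
  obtain ⟨k, c, -, hk⟩ := exists_eq_monomial_of_isUnit_ofMvPolynomial h
  have hsupp : ∀ t, Finsupp.single t 1 = k := fun t => by
    by_contra hne
    have := coeff_linearForm q n t
    rw [hk, MvPolynomial.coeff_monomial, if_neg (Ne.symm hne)] at this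
    exact inv_ne_zero (μ_ne_zero q n t) this.symm
  have := (hsupp ⟨0, by omega⟩).trans (hsupp ⟨1, by omega⟩).symm
  simp [Finsupp.single_left_inj] at this

theorem prime_r0mu (hd : 2 ≤ d) (n : Fin d → ℤ) : Prime (r0mu d q n) := by
  rw [r0mu_eq_invVars, MulEquiv.prime_iff]
  exact prime_ofMvPolynomial (irreducible_linearForm q (by omega) n).prime
    (not_isUnit_ofMvPolynomial_linearForm q hd n)

theorem eq_of_r0mu_dvd (hd : 2 ≤ d) (hq : ∀ t, 1 ≤ q t) (hgcd : Finset.univ.gcd q = 1)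
    {n n' : W d q} (h : r0mu d q (wz n) ∣ r0mu d q (wz n')) : n = n' := by
  rw [r0mu_eq_invVars, r0mu_eq_invVars, map_dvd_iff] at h
  have hL := dvd_of_ofMvPolynomial_dvd (irreducible_linearForm q (by omega) _).prime
    (not_isUnit_ofMvPolynomial_linearForm q hd _) h
  obtain ⟨u, hu⟩ := (irreducible_linearForm q (by omega) _).associated_of_dvd
    (irreducible_linearForm q (by omega) _) hL
  obtain ⟨e, -, he⟩ := MvPolynomial.isUnit_iff_eq_C_of_isReduced.1 u.isUnit
  refine eq_of_forall_μ_eq_mul q hq hgcd (e := e) fun t => ?_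
  have := congrArg (MvPolynomial.coeff (Finsupp.single t 1)) hu
  rw [he, mul_comm, MvPolynomial.coeff_C_mul, coeff_linearForm, coeff_linearForm] at this
  field_simp [μ_ne_zero] at this
  linear_combination -this

def μUnits (k : Fin d → ℤ) : Fin d → ℂˣ := fun t => Units.mk0 (μ q k t) (μ_ne_zero q k t)

theorem scale_r0mu (k n : Fin d → ℤ) : scale (μUnits q k) (r0mu d q n) = r0mu d q (n + k) := by
  simp only [r0mu, map_sum, scale_mono]
  refine Finset.sum_congr rfl fun t _ => ?_
  rw [Finset.prod_eq_single t (fun j _ hj => by simp [eV, hj]) (by simp)]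
  simp [eV, μUnits, μ_add, mul_comm]

theorem scale_μUnits_dilate (k : Fin d → ℤ) (f : MvLaurent d) :
    scale (μUnits q k) (dilate (qz q) f) = dilate (qz q) f :=
  scale_dilate (fun t => Units.ext (by simp [μUnits, qz, μ_pow_self])) f

theorem irreducibleL_of_odotPow_eq (hd : 2 ≤ d) (hq : ∀ t, 1 ≤ q t)
    (hgcd : Finset.univ.gcd q = 1) {c : ℂ} (hc : c ≠ 0) {g : MvLaurent d}
    (hg : odotPow (qz q) g = mono (fun _ => (Qn q : ℤ)) c * ∏ n : W d q, r0mu d q (wz n)) :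
    IrreducibleL g := by
  have : Nonempty (W d q) := ⟨fun t => ⟨0, hq t⟩⟩
  refine .of_irreducible <| irreducible_of_map_associated_prod (dilate (qz q) : MvLaurent d →* _)
    (fun _ => isUnit_of_isUnit_dilate fun t => by simpa [qz] using Nat.one_le_iff_ne_zero.1 (hq t))
    (fun k => (scale (μUnits q k) : MvLaurent d →* _)) (fun k => scale_μUnits_dilate q k)
    (fun n => prime_r0mu q hd (wz n)) (fun _ _ => eq_of_r0mu_dvd q hd hq hgcd)
    (fun i j => ⟨wz j - wz i, by simp [scale_r0mu]⟩) ?_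
  rw [MonoidHom.coe_coe, ← odotPow_eq_dilate, hg]
  exact associated_unit_mul_left _ _ (isUnit_mono hc)

end Decor

theorem decorated_asymptotics_irreducible_general
    (d ν : ℕ) (hd : 2 ≤ d)
    (q : Fin d → ℕ) (hq : ∀ t, 1 ≤ q t)
    (hgcd : Finset.univ.gcd q = 1)
    (V : Fin ν → (Fin d → ℤ) → ℂ)
    (s : Polynomial ℂ)
    (hchar : ∀ lam : ℂ, s.eval lam ≠ 0 →
      lowComp (fplus (decorPt d ν q V lam)) =
        mono (fun _ => (Qn q : ℤ)) (s.eval lam) * ∏ n : W d q, r0mu d q (wz n) ∧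
      lowComp (fplus (hat (decorPt d ν q V lam))) =
        mono (fun _ => (Qn q : ℤ)) (s.eval lam) * ∏ n : W d q, r0mu d q (wz n))
    (h0 hinf : ℂ → MvLaurent d)
    (hh0 : ∀ lam : ℂ, odotPow (qz q) (h0 lam) = lowComp (fplus (decorPt d ν q V lam)))
    (hhinf : ∀ lam : ℂ,
      odotPow (qz q) (hinf lam) = lowComp (fplus (hat (decorPt d ν q V lam)))) :
    ∀ lam : ℂ, s.eval lam ≠ 0 → IrreducibleL (h0 lam) ∧ IrreducibleL (hinf lam) := by
  intro lam hlam
  obtain ⟨hlow0, hlowinf⟩ := hchar lam hlam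
  exact ⟨irreducibleL_of_odotPow_eq q hd hq hgcd hlam ((hh0 lam).trans hlow0),
    irreducibleL_of_odotPow_eq q hd hq hgcd hlam ((hhinf lam).trans hlowinf)⟩

/-- **Lemma 6.1 (irreducibility of the asymptotics, decorated lattice)**: with
`gcd(q₁,…,q_d) = 1`, for every `λ` outside the (finite) zero set of `s`, the
asymptotics `h₀(·;λ)` and `h₁(·;λ)` are irreducible. -/
theorem decorated_asymptotics_irreducible
    (d ν : ℕ) (hd : 2 ≤ d) (hν : 3 ≤ ν)
    (q : Fin d → ℕ) (hq : ∀ t, 1 ≤ q t)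
    (hgcd : Finset.univ.gcd q = 1)
    (V : Fin ν → (Fin d → ℤ) → ℂ) (hV : QPeriodic q V)
    (s : Polynomial ℂ) (hs : s.degree = ((ν - 1) * Qn q : ℕ))
    (hchar : ∀ lam : ℂ, s.eval lam ≠ 0 →
      lowComp (fplus (decorPt d ν q V lam)) =
        mono (fun _ => (Qn q : ℤ)) (s.eval lam) * ∏ n : W d q, r0mu d q (wz n) ∧
      lowComp (fplus (hat (decorPt d ν q V lam))) =
        mono (fun _ => (Qn q : ℤ)) (s.eval lam) * ∏ n : W d q, r0mu d q (wz n))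
    (h0 hinf : ℂ → MvLaurent d)
    (hh0 : ∀ lam : ℂ, odotPow (qz q) (h0 lam) = lowComp (fplus (decorPt d ν q V lam)))
    (hhinf : ∀ lam : ℂ,
      odotPow (qz q) (hinf lam) = lowComp (fplus (hat (decorPt d ν q V lam)))) :
    ∀ lam : ℂ, s.eval lam ≠ 0 → IrreducibleL (h0 lam) ∧ IrreducibleL (hinf lam) :=
  decorated_asymptotics_irreducible_general d ν hd q hq hgcd V s hchar h0 hinf hh0 hhinf
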